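/- arXiv:1412.6327 — 2 statements merged into one kernel-verified Lean document; each statement's English description precedes it below -/
import Mathlib

section
/- For the K=2 truncated boundary Markov chain with states b, bb, ob and transition probabilities P(b→bb) = (1−p)/2, P(b→ob) = (3/8)p(1−p), P(bb→b) = (1+p)/9, P(bb→ob) = (3/8)p(1−p), P(ob→b) = (1+p)/9, P(ob→bb) = (1−p)/2 (with remaining mass as self-loops), the stationary distribution satisfies μ(b) = 8(1+p)/(−27p² − p + 44) and μ(ob) = 27p(1−p)/(−27p² − p + 44), for all p ∈ [0,1). -/
open Finset

/-- The transition matrix of the `K = 2` truncated boundary Markov chain, on the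
state space `{b, bb, ob}` encoded as `Fin 3` with `0 = b`, `1 = bb`, `2 = ob`.
Off-diagonal entries are as prescribed; the diagonal (self-loop) entries are
chosen so that each row sums to `1`. -/
noncomputable def K2mat (p : ℝ) : Matrix (Fin 3) (Fin 3) ℝ :=
  !![1 - (1 - p) / 2 - 3 / 8 * p * (1 - p), (1 - p) / 2, 3 / 8 * p * (1 - p);
     (1 + p) / 9, 1 - (1 + p) / 9 - 3 / 8 * p * (1 - p), 3 / 8 * p * (1 - p);
     (1 + p) / 9, (1 - p) / 2, 1 - (1 + p) / 9 - (1 - p) / 2]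

/-- For every `p ∈ [0,1)`, the `K = 2` truncated boundary chain has a stationary
distribution `μ` with `μ(b) = 8(1+p)/(−27p² − p + 44)` and
`μ(ob) = 27p(1−p)/(−27p² − p + 44)`. -/
theorem K2_stationary (p : ℝ) (hp0 : 0 ≤ p) (hp1 : p < 1) :
    ∃ μ : Fin 3 → ℝ,
      (∀ i, 0 ≤ μ i) ∧
      (∑ i, μ i) = 1 ∧
      (∀ j, ∑ i, μ i * K2mat p i j = μ j) ∧
      μ 0 = 8 * (1 + p) / (-27 * p ^ 2 - p + 44) ∧
      μ 2 = 27 * p * (1 - p) / (-27 * p ^ 2 - p + 44) := by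
  set D : ℝ := -27 * p ^ 2 - p + 44 with hD
  have hDpos : 0 < D := by nlinarith
  have hDne : D ≠ 0 := ne_of_gt hDpos
  refine ⟨![8 * (1 + p) / D, 36 * (1 - p) / D, 27 * p * (1 - p) / D], ?_, ?_, ?_, rfl, rfl⟩
  · intro i
    have h1 : 0 ≤ 1 - p := by linarith
    fin_cases i <;> simp <;> apply div_nonneg <;> positivity
  · simp [Fin.sum_univ_three]
    field_simp
    ring
  · intro j
    fin_cases j <;>
      simp [Fin.sum_univ_three, K2mat, Matrix.cons_val_zero, Matrix.cons_val_one,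
        Matrix.head_cons, Matrix.cons_val_two, Matrix.tail_cons, Matrix.cons_val',
        Matrix.empty_val', Matrix.cons_val_fin_one, Matrix.head_fin_const, Matrix.vecHead, Matrix.vecTail] <;>
      field_simp <;> ring
end

section
/- The polynomial 81p⁴ + 162p³ − 251p² − 232p + 176 has a unique root in [0,1], and this root lies in (0.5725, 0.5726). -/
/-- Any root of the polynomial in `[0,1]` lies in `(0.5725, 0.5726)`. -/
lemma root_loc (q : ℝ) (hq : q ∈ Set.Icc (0 : ℝ) 1)
    (h : 81 * q ^ 4 + 162 * q ^ 3 - 251 * q ^ 2 - 232 * q + 176 = 0) :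
    0.5725 < q ∧ q < 0.5726 := by
  obtain ⟨h0, h1⟩ := hq
  constructor
  · by_contra hle
    push_neg at hle
    nlinarith [sq_nonneg q, sq_nonneg (q - 0.5725), sq_nonneg (q + 1), mul_nonneg h0 h0,
      mul_nonneg (mul_nonneg h0 h0) h0, sq_nonneg (q - 0.3)]
  · by_contra hle
    push_neg at hle
    nlinarith [sq_nonneg (q - 0.5726), sq_nonneg (1 - q), mul_nonneg (sub_nonneg.2 hle) (sub_nonneg.2 h1),
      mul_nonneg (mul_nonneg (sub_nonneg.2 hle) (sub_nonneg.2 h1)) (sub_nonneg.2 h1),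
      mul_nonneg (mul_nonneg (sub_nonneg.2 hle) (sub_nonneg.2 hle)) (sub_nonneg.2 h1)]

/-- The polynomial `81p⁴ + 162p³ − 251p² − 232p + 176` has a unique root in
`[0,1]`, and this root lies in `(0.5725, 0.5726)`. -/
theorem upper_bound_polynomial_root :
    ∃ p₀ ∈ Set.Icc (0 : ℝ) 1,
      (81 * p₀ ^ 4 + 162 * p₀ ^ 3 - 251 * p₀ ^ 2 - 232 * p₀ + 176 = 0) ∧
      (∀ q ∈ Set.Icc (0 : ℝ) 1,
        81 * q ^ 4 + 162 * q ^ 3 - 251 * q ^ 2 - 232 * q + 176 = 0 → q = p₀) ∧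
      0.5725 < p₀ ∧ p₀ < 0.5726 := by
  set f : ℝ → ℝ := fun p => 81 * p ^ 4 + 162 * p ^ 3 - 251 * p ^ 2 - 232 * p + 176 with hf
  have hcont : ContinuousOn f (Set.Icc (0.5725 : ℝ) 0.5726) := by
    apply Continuous.continuousOn; unfold f; continuity
  have hab : (0.5725 : ℝ) ≤ 0.5726 := by norm_num
  have hsub := intermediate_value_Icc' hab hcont
  have h0mem : (0 : ℝ) ∈ Set.Icc (f 0.5726) (f 0.5725) := by
    constructor <;> simp only [hf] <;> norm_num
  obtain ⟨p₀, hp₀mem, hp₀⟩ := hsub h0mem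
  have hp₀Icc : p₀ ∈ Set.Icc (0 : ℝ) 1 := by
    constructor <;> [linarith [hp₀mem.1]; linarith [hp₀mem.2]]
  have hroot : 81 * p₀ ^ 4 + 162 * p₀ ^ 3 - 251 * p₀ ^ 2 - 232 * p₀ + 176 = 0 := hp₀
  have hloc := root_loc p₀ hp₀Icc hroot
  refine ⟨p₀, hp₀Icc, hroot, ?_, hloc⟩
  intro q hq hq0
  have hqloc := root_loc q hq hq0
  have key : (q - p₀) * (81 * (q ^ 3 + q ^ 2 * p₀ + q * p₀ ^ 2 + p₀ ^ 3)
      + 162 * (q ^ 2 + q * p₀ + p₀ ^ 2) - 251 * (q + p₀) - 232) = 0 := by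
    nlinarith [hq0, hroot]
  have hneg : 81 * (q ^ 3 + q ^ 2 * p₀ + q * p₀ ^ 2 + p₀ ^ 3)
      + 162 * (q ^ 2 + q * p₀ + p₀ ^ 2) - 251 * (q + p₀) - 232 < 0 := by
    nlinarith [hqloc.1, hqloc.2, hloc.1, hloc.2, sq_nonneg (q - p₀),
      mul_pos (lt_trans (by norm_num) hqloc.1) (lt_trans (by norm_num) hloc.1)]
  have := mul_eq_zero.1 key
  rcases this with h | h
  · linarith
  · exact absurd h (ne_of_lt hneg)
end
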